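/- The Dirichlet energy of the random walk is monotone decreasing under star network reduction: for any $f:V\to\mathbb{R}$ and vertex $x$ with positive total conductance, $\sum_{\{z,w\}\subseteq V} c_{zw}[f(z)-f(w)]^2 \geq \sum_{\{y,z\}\subseteq V\setminus\{x\}} \tilde{c}_{yz}[f(y)-f(z)]^2$, where $\tilde{c}_{yz} = c_{yz} + c_{yx}c_{xz}/\sum_{w\neq x} c_{xw}$. -/

import Mathlib

open Finset

noncomputable section

/-!
Deleting `x` removes from the energy exactly the star term `2 ∑_{y ≠ x} c x y (f y - f x)²`,
while the added mesh conductances `c y x c x z / S` contribute, with `g = f - f x`,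
`2 (S ∑ c x y g y² - (∑ c x y g y)²) / S ≤ 2 ∑ c x y g y²`.
-/

/-- Twice the Dirichlet energy of `f` on the vertex set `s` with conductances `c`
(each unordered pair is counted in both orders). -/
def dirichletEnergy {V : Type*} (s : Finset V) (c : V → V → ℝ) (f : V → ℝ) : ℝ :=
  ∑ y ∈ s, ∑ z ∈ s, c y z * (f y - f z) ^ 2

section

variable {V : Type*} (s : Finset V)

theorem dirichletEnergy_add (c d : V → V → ℝ) (f : V → ℝ) :
    dirichletEnergy s (fun y z => c y z + d y z) f = dirichletEnergy s c f + dirichletEnergy s d f := by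
  simp only [dirichletEnergy, add_mul, sum_add_distrib]

theorem dirichletEnergy_insert [DecidableEq V] {x : V} (hx : x ∉ s) (c : V → V → ℝ)
    (hsymm : ∀ z w, c z w = c w z) (f : V → ℝ) :
    dirichletEnergy (insert x s) c f
      = dirichletEnergy s c f + 2 * ∑ y ∈ s, c x y * (f y - f x) ^ 2 := by
  have hrow : ∑ y ∈ s, c y x * (f y - f x) ^ 2 = ∑ y ∈ s, c x y * (f y - f x) ^ 2 :=
    sum_congr rfl fun y _ => by rw [hsymm]
  have hcol : ∑ z ∈ s, c x z * (f x - f z) ^ 2 = ∑ y ∈ s, c x y * (f y - f x) ^ 2 :=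
    sum_congr rfl fun y _ => by ring
  simp only [dirichletEnergy, sum_insert hx, sub_self, sum_add_distrib, hrow, hcol]
  ring

theorem sum_sum_mul_mul_sub_sq (a g : V → ℝ) :
    ∑ y ∈ s, ∑ z ∈ s, a y * a z * (g y - g z) ^ 2
      = 2 * ((∑ y ∈ s, a y) * ∑ y ∈ s, a y * g y ^ 2 - (∑ y ∈ s, a y * g y) ^ 2) := by
  have hexpand : ∀ y z, a y * a z * (g y - g z) ^ 2
      = a y * g y ^ 2 * a z + a y * (a z * g z ^ 2) - 2 * (a y * g y) * (a z * g z) :=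
    fun y z => by ring
  simp only [hexpand, sum_sub_distrib, sum_add_distrib, ← mul_sum, ← sum_mul]
  ring

/-- `a y * a z / ∑ a` are the mesh conductances that replace a star with edge weights `a`. -/
theorem dirichletEnergy_mesh_le_star (a : V → ℝ) (ha : 0 < ∑ y ∈ s, a y) (f : V → ℝ) (t : ℝ) :
    dirichletEnergy s (fun y z => a y * a z / ∑ w ∈ s, a w) f
      ≤ 2 * ∑ y ∈ s, a y * (f y - t) ^ 2 := by
  have hshift : dirichletEnergy s (fun y z => a y * a z / ∑ w ∈ s, a w) f
      = (∑ y ∈ s, ∑ z ∈ s, a y * a z * ((f y - t) - (f z - t)) ^ 2) / ∑ w ∈ s, a w := by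
    simp only [dirichletEnergy, sum_div, sub_sub_sub_cancel_right, div_mul_eq_mul_div]
  rw [hshift, sum_sum_mul_mul_sub_sq, div_le_iff₀ ha]
  nlinarith [sq_nonneg (∑ y ∈ s, a y * (f y - t))]

end

theorem elEnergy_mono_reduction_general {V : Type*} [Fintype V] [DecidableEq V]
    (c : V → V → ℝ) (hsymm : ∀ z w, c z w = c w z)
    (x : V)
    (hx : 0 < ∑ w ∈ univ.erase x, c x w) (f : V → ℝ) :
    (1 / 2) * ∑ z, ∑ w, c z w * (f z - f w) ^ 2 ≥
      (1 / 2) * ∑ y ∈ univ.erase x, ∑ z ∈ univ.erase x,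
        (c y z + c y x * c x z / ∑ w ∈ univ.erase x, c x w) * (f y - f z) ^ 2 := by
  set E := univ.erase x
  have hsplit : dirichletEnergy univ c f
      = dirichletEnergy E c f + 2 * ∑ y ∈ E, c x y * (f y - f x) ^ 2 := by
    rw [← dirichletEnergy_insert E (notMem_erase x univ) c hsymm, insert_erase (mem_univ x)]
  have hreduced : ∑ y ∈ E, ∑ z ∈ E, (c y z + c y x * c x z / ∑ w ∈ E, c x w) * (f y - f z) ^ 2
      = dirichletEnergy E c f + dirichletEnergy E (fun y z => c x y * c x z / ∑ w ∈ E, c x w) f := by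
    rw [← dirichletEnergy_add]
    simp only [dirichletEnergy, hsymm _ x]
  have hmesh := dirichletEnergy_mesh_le_star E (c x) hx f (f x)
  change (1 / 2) * dirichletEnergy univ c f ≥ _
  rw [hreduced, hsplit]
  linarith

theorem elEnergy_mono_reduction {V : Type*} [Fintype V] [DecidableEq V]
    (c : V → V → ℝ) (hnn : ∀ z w, 0 ≤ c z w) (hsymm : ∀ z w, c z w = c w z)
    (hdiag : ∀ z, c z z = 0) (x : V)
    (hx : 0 < ∑ w ∈ univ.erase x, c x w) (f : V → ℝ) :
    (1 / 2) * ∑ z, ∑ w, c z w * (f z - f w) ^ 2 ≥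
      (1 / 2) * ∑ y ∈ univ.erase x, ∑ z ∈ univ.erase x,
        (c y z + c y x * c x z / ∑ w ∈ univ.erase x, c x w) * (f y - f z) ^ 2 :=
  elEnergy_mono_reduction_general c hsymm x hx f
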